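/- If A ∈ 𝒰 (A is open in the I-sparse set topology) and x ∈ A, then the upper I-density satisfies I-d⁻(x, A') = 1 for every measurable cover A' of A. -/

import Mathlib

open MeasureTheory Filter Set
open scoped ENNReal

noncomputable section

/-- A nontrivial admissible ideal of subsets of ℕ: closed under subsets and
finite unions, contains every finite set, and does not contain ℕ itself. -/
structure AdmissibleIdeal : Type where
  carrier : Set (Set ℕ)
  subset_mem : ∀ ⦃A B : Set ℕ⦄, A ∈ carrier → B ⊆ A → B ∈ carrier
  union_mem : ∀ ⦃A B : Set ℕ⦄, A ∈ carrier → B ∈ carrier → A ∪ B ∈ carrier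
  finite_mem : ∀ A : Set ℕ, A.Finite → A ∈ carrier
  univ_not_mem : (Set.univ : Set ℕ) ∉ carrier

/-- The filter F(I) = {M ⊆ ℕ : ℕ \ M ∈ I} associated with the ideal I. -/
def AdmissibleIdeal.filter (I : AdmissibleIdeal) : Filter ℕ :=
  Filter.comk (· ∈ I.carrier) (I.finite_mem ∅ Set.finite_empty)
    (fun _t ht _s hs => I.subset_mem ht hs)
    (fun _s hs _t ht => I.union_mem hs ht)

/-- A sequence of closed intervals admissible about the point `p`:
each `J n` is a closed interval containing `p`, and
`{n : 0 < λ(J n) < 1/n} ∈ F(I)`. -/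
def AdmissibleSeq (I : AdmissibleIdeal) (p : ℝ) (J : ℕ → Set ℝ) : Prop :=
  (∀ n, ∃ a b : ℝ, a ≤ b ∧ J n = Set.Icc a b) ∧ (∀ n, p ∈ J n) ∧
    {n : ℕ | 0 < volume (J n) ∧ volume (J n) < (n : ℝ≥0∞)⁻¹} ∈ I.filter

/-- The sequence n ↦ λ(E ∩ J n)/λ(J n) (interpreted as 0 when λ(J n) = 0). -/
def ratioSeq (E : Set ℝ) (J : ℕ → Set ℝ) : ℕ → ℝ :=
  fun n => (volume (E ∩ J n) / volume (J n)).toReal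

/-- Upper I-density of `E` at `p`: sup over admissible sequences of the
limsup along `F(I)` of the measure ratios. -/
def upperIDensity (I : AdmissibleIdeal) (p : ℝ) (E : Set ℝ) : ℝ :=
  sSup {l : ℝ | ∃ J : ℕ → Set ℝ, AdmissibleSeq I p J ∧
    l = Filter.limsup (ratioSeq E J) I.filter}

/-- Lower I-density of `E` at `p`: inf over admissible sequences of the
liminf along `F(I)` of the measure ratios. -/
def lowerIDensity (I : AdmissibleIdeal) (p : ℝ) (E : Set ℝ) : ℝ :=
  sInf {l : ℝ | ∃ J : ℕ → Set ℝ, AdmissibleSeq I p J ∧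
    l = Filter.liminf (ratioSeq E J) I.filter}

/-- `C` is a measurable cover of `A`. -/
def IsMeasurableCover (C A : Set ℝ) : Prop :=
  MeasurableSet C ∧ A ⊆ C ∧
    ∀ F : Set ℝ, MeasurableSet F → F ⊆ C \ A → volume F = 0

/-- `A` is I-sparse at `x`, i.e. `A ∈ S_I(x)`. -/
def ISparseAt (I : AdmissibleIdeal) (A : Set ℝ) (x : ℝ) : Prop :=
  ∀ B : Set ℝ, MeasurableSet B → upperIDensity I x B < 1 →
    ∀ C : Set ℝ, IsMeasurableCover C A → upperIDensity I x (C ∪ B) < 1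

/-- The I-density topology T_I. -/
def IDensityTopology (I : AdmissibleIdeal) : Set (Set ℝ) :=
  {E | MeasurableSet E ∧ ∀ x ∈ E, lowerIDensity I x E = 1}

/-- The I-sparse set topology 𝒰. -/
def sparseTop (I : AdmissibleIdeal) : Set (Set ℝ) :=
  {E | ∀ x ∈ E, ISparseAt I Eᶜ x}

/-
If the cover `A'` had upper density `< 1` at `x`, sparseness of `Aᶜ` at `x` (with `B = A'` and
the measurable hull of `Aᶜ` as its cover) would give the same for the union of the two covers,
which is all of `ℝ` and has upper density `1`.
-/

instance AdmissibleIdeal.neBot_filter (I : AdmissibleIdeal) : I.filter.NeBot := by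
  refine neBot_iff.mpr fun h => I.univ_not_mem ?_
  have : (∅ : Set ℕ) ∈ I.filter := h ▸ mem_bot
  simpa [AdmissibleIdeal.filter, mem_comk] using this

lemma ratioSeq_le_one (E : Set ℝ) (J : ℕ → Set ℝ) (n : ℕ) : ratioSeq E J n ≤ 1 := by
  have h : volume (E ∩ J n) / volume (J n) ≤ 1 :=
    ENNReal.div_le_of_le_mul (by simpa using measure_mono inter_subset_right)
  exact (ENNReal.toReal_mono ENNReal.one_ne_top h).trans_eq ENNReal.toReal_one

lemma ratioSeq_univ_apply {J : ℕ → Set ℝ} {n : ℕ} (h₀ : volume (J n) ≠ 0)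
    (hfin : volume (J n) ≠ ∞) : ratioSeq univ J n = 1 := by
  simp [ratioSeq, ENNReal.div_self h₀ hfin]

lemma limsup_ratioSeq_le_one (I : AdmissibleIdeal) (E : Set ℝ) (J : ℕ → Set ℝ) :
    limsup (ratioSeq E J) I.filter ≤ 1 :=
  limsup_le_of_le (isCoboundedUnder_le_of_le _ fun _ => ENNReal.toReal_nonneg)
    (.of_forall (ratioSeq_le_one E J))

lemma volume_Icc_add_inv (x : ℝ) (n : ℕ) :
    volume (Icc x (x + ((n : ℝ) + 2)⁻¹)) = ENNReal.ofReal ((n : ℝ) + 2)⁻¹ := by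
  rw [Real.volume_Icc, add_sub_cancel_left]

lemma admissibleSeq_Icc_add_inv (I : AdmissibleIdeal) (x : ℝ) :
    AdmissibleSeq I x fun n => Icc x (x + ((n : ℝ) + 2)⁻¹) := by
  have hpos (n : ℕ) : (0 : ℝ) < ((n : ℝ) + 2)⁻¹ := by positivity
  refine ⟨fun n => ⟨x, _, by linarith [hpos n], rfl⟩,
    fun n => ⟨le_rfl, by linarith [hpos n]⟩, Eventually.of_forall fun n => ?_⟩
  rw [volume_Icc_add_inv]
  refine ⟨ENNReal.ofReal_pos.mpr (hpos n), ?_⟩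
  rcases Nat.eq_zero_or_pos n with rfl | hn
  · simp -- `(0 : ℝ≥0∞)⁻¹ = ∞`
  · have hn' : (0 : ℝ) < n := Nat.cast_pos.mpr hn
    rw [← ENNReal.ofReal_natCast, ← ENNReal.ofReal_inv_of_pos hn',
      ENNReal.ofReal_lt_ofReal_iff (inv_pos.mpr hn'), inv_lt_inv₀ (by linarith) hn']
    linarith

lemma upperIDensity_le_one (I : AdmissibleIdeal) (x : ℝ) (E : Set ℝ) :
    upperIDensity I x E ≤ 1 :=
  csSup_le ⟨_, _, admissibleSeq_Icc_add_inv I x, rfl⟩ fun _ ⟨J, _, hl⟩ =>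
    hl ▸ limsup_ratioSeq_le_one I E J

lemma upperIDensity_univ (I : AdmissibleIdeal) (x : ℝ) : upperIDensity I x univ = 1 := by
  refine (upperIDensity_le_one I x univ).antisymm
    (le_csSup ?_ ⟨_, admissibleSeq_Icc_add_inv I x, ?_⟩)
  · exact ⟨1, fun _ ⟨J, _, hl⟩ => hl ▸ limsup_ratioSeq_le_one I univ J⟩
  · have : ratioSeq univ (fun n => Icc x (x + ((n : ℝ) + 2)⁻¹)) = fun _ => 1 := by
      funext n
      exact ratioSeq_univ_apply (by simp; positivity) (by simp)
    rw [this, limsup_const]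

lemma isMeasurableCover_toMeasurable (s : Set ℝ) :
    IsMeasurableCover (toMeasurable volume s) s := by
  refine ⟨measurableSet_toMeasurable _ _, subset_toMeasurable _ _, fun F hF hFsub => ?_⟩
  rw [← inter_eq_right.mpr fun y hy => (hFsub hy).1,
    Measure.measure_toMeasurable_inter_of_sFinite hF,
    (disjoint_sdiff_right.mono_right hFsub).inter_eq, measure_empty]

/-- If `A` is open in the I-sparse set topology and `x ∈ A`, then every measurable
cover of `A` has upper I-density one at `x`. -/
theorem upperIDensity_cover_of_sparseTop_mem (I : AdmissibleIdeal) (A : Set ℝ)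
    (hA : A ∈ sparseTop I) (x : ℝ) (hx : x ∈ A) :
    ∀ A' : Set ℝ, IsMeasurableCover A' A → upperIDensity I x A' = 1 := by
  intro A' hA'
  refine (upperIDensity_le_one I x A').antisymm (not_lt.mp fun hlt => ?_)
  have hunion : toMeasurable volume Aᶜ ∪ A' = univ :=
    eq_univ_of_forall fun y => (em (y ∈ A)).symm.imp (subset_toMeasurable _ _ ·) (hA'.2.1 ·)
  have := hA x hx A' hA'.1 hlt _ (isMeasurableCover_toMeasurable Aᶜ)
  rw [hunion, upperIDensity_univ] at this
  exact this.false
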